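/- arXiv:2412.01939 — 3 statements merged into one kernel-verified Lean document; each statement's English description precedes it below -/
import Mathlib

section
/- Let H ⊆ ℕ be a coinfinite c.e. set and suppose there is a family of sets Z(ρ) ⊆ ℕ ∖ H (ρ ∈ 2^{<ω}) such that: Z(ε) =* ℕ ∖ H; every Z(ρ) is infinite; every H ∪ Z(ρ) is c.e.; Z(ρ0) ∩ Z(ρ1) = ∅ and Z(ρ) =* Z(ρ0) ∪ Z(ρ1) for all ρ; and for every c.e. set W there is a finite D ⊆ 2^{<ω} with W ∩ (ℕ ∖ H) =* ⋃_{ρ∈D} Z(ρ). Then: (1) every c.e. set W ⊇ H has a complement in L*(H), i.e., there is a c.e. set V ⊇ H with V ∩ W =* H and V ∪ W =* ℕ; and (2) every c.e. set W ⊇ H with W ∖ H infinite splits, i.e., there are c.e. sets W₀, W₁ ⊇ H with W₀ ∪ W₁ =* W, W₀ ∩ W₁ =* H, and both W₀ ∖ H and W₁ ∖ H infinite. Hence L*(H) is an atomless Boolean algebra. -/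
namespace Hhs

/-- A set is computably enumerable if it is the domain of a partial computable function. -/
def CE (A : Set ℕ) : Prop := ∃ f : ℕ →. ℕ, Nat.Partrec f ∧ A = {n | (f n).Dom}

/-- `X =* Y`: the symmetric difference of `X` and `Y` is finite. -/
def EqStar (X Y : Set ℕ) : Prop := ((X \ Y) ∪ (Y \ X)).Finite

/-!
Refining to a common level, every c.e. superset `W` of `H` agrees modulo finite sets with `H`
together with the union of the `Z σ` over a set `E` of strings of one length `n`. Distinct strings
of the same length carry almost disjoint sets, and the sets of all strings of length `n` together
cover `Hᶜ` up to a finite set. Hence the strings of length `n` outside `E` yield a complement of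
`W`, and replacing every `σ ∈ E` by `σ0`, respectively `σ1`, splits `W`.
-/

open Filter Set

theorem eqStar_iff_eventuallyEq {X Y : Set ℕ} : EqStar X Y ↔ X =ᶠ[cofinite] Y := by
  rw [EqStar, eventuallyEq_set, eventually_cofinite]
  congr!
  ext x
  simp only [mem_union, Set.mem_sdiff, mem_ofPred_eq]
  tauto

theorem CE.union {A B : Set ℕ} (hA : CE A) (hB : CE B) : CE (A ∪ B) := by
  obtain ⟨f, hf, rfl⟩ := hA
  obtain ⟨g, hg, rfl⟩ := hB
  obtain ⟨k, hk, hkdom⟩ := Nat.Partrec.merge' hf hg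
  exact ⟨k, hk, ext fun n => by simpa using (hkdom n).2.symm⟩

theorem CE.union_biUnion {H : Set ℕ} {ι : Type*} {X : ι → Set ℕ} (hH : CE H)
    (hX : ∀ i, CE (H ∪ X i)) (S : Finset ι) : CE (H ∪ ⋃ i ∈ S, X i) := by
  classical
  induction S using Finset.induction_on with
  | empty => simpa using hH
  | insert i S _ ih =>
    rw [Finset.set_biUnion_insert, union_union_distrib_left]
    exact (hX i).union ih

theorem eventuallyEq_union_of_sdiff {α : Type*} {l : Filter α} {H W A : Set α} (hHW : H ⊆ W)
    (hA : W \ H =ᶠ[l] A) : W =ᶠ[l] (H ∪ A : Set α) := by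
  rw [← union_sdiff_cancel hHW]
  exact EventuallyEq.rfl.union hA

theorem biUnion_inter_biUnion_eventuallyEq_empty {α ι κ : Type*} {l : Filter α} {S : Finset ι}
    {T : Finset κ} {A : ι → Set α} {B : κ → Set α}
    (h : ∀ i ∈ S, ∀ j ∈ T, (A i ∩ B j : Set α) =ᶠ[l] (∅ : Set α)) :
    ((⋃ i ∈ S, A i) ∩ (⋃ j ∈ T, B j) : Set α) =ᶠ[l] (∅ : Set α) := by
  rw [iUnion₂_inter_iUnion₂]
  simpa only [iUnion_empty, Finset.mem_coe] using S.finite_toSet.eventuallyEq_iUnion fun i hi =>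
    T.finite_toSet.eventuallyEq_iUnion fun j hj => h i hi j hj

noncomputable def level (n : ℕ) : Finset (List Bool) := (List.finite_length_eq Bool n).toFinset

@[simp]
theorem mem_level {n : ℕ} {σ : List Bool} : σ ∈ level n ↔ σ.length = n := by
  simp [level]

theorem level_zero : level 0 = {[]} := by
  ext σ
  simp

theorem biUnion_level_succ {α : Type*} (f : List Bool → Set α) (k : ℕ) :
    ⋃ σ ∈ level (k + 1), f σ =
      (⋃ τ ∈ level k, f (false :: τ)) ∪ ⋃ τ ∈ level k, f (true :: τ) := by
  ext x
  simp only [mem_union, mem_iUnion, mem_level, exists_prop]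
  constructor
  · rintro ⟨_ | ⟨b, τ⟩, hlen, hx⟩
    · simp at hlen
    · cases b
      exacts [Or.inl ⟨τ, by simpa using hlen, hx⟩, Or.inr ⟨τ, by simpa using hlen, hx⟩]
  · rintro (⟨τ, hlen, hx⟩ | ⟨τ, hlen, hx⟩) <;> exact ⟨_, by simpa using hlen, hx⟩

structure IsSplittingTree {α : Type*} (l : Filter α) (Z : List Bool → Set α) : Prop where
  inter_children : ∀ ρ, (Z (ρ ++ [false]) ∩ Z (ρ ++ [true]) : Set α) =ᶠ[l] (∅ : Set α)
  eq_union_children : ∀ ρ, Z ρ =ᶠ[l] (Z (ρ ++ [false]) ∪ Z (ρ ++ [true]) : Set α)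

namespace IsSplittingTree

variable {α : Type*} {l : Filter α} {Z : List Bool → Set α}

theorem child_le (hZ : IsSplittingTree l Z) (ρ : List Bool) (b : Bool) :
    Z (ρ ++ [b]) ≤ᶠ[l] Z ρ := by
  refine LE.le.eventuallyLE ?_ |>.trans (hZ.eq_union_children ρ).symm.le
  cases b
  exacts [subset_union_left, subset_union_right]

theorem append_le (hZ : IsSplittingTree l Z) (ρ τ : List Bool) : Z (ρ ++ τ) ≤ᶠ[l] Z ρ := by
  induction τ generalizing ρ with
  | nil => simpa using EventuallyLE.refl l (Z ρ)
  | cons b τ ih =>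
    rw [List.append_cons]
    exact (ih _).trans (hZ.child_le ρ b)

theorem inter_children_of_ne (hZ : IsSplittingTree l Z) {b c : Bool} (hbc : b ≠ c)
    (ρ : List Bool) : (Z (ρ ++ [b]) ∩ Z (ρ ++ [c]) : Set α) =ᶠ[l] (∅ : Set α) := by
  cases b <;> cases c <;> simp only [ne_eq, not_true_eq_false] at hbc
  · exact hZ.inter_children ρ
  · exact inter_comm (Z _) _ ▸ hZ.inter_children ρ

theorem inter_append_eventuallyEq_empty (hZ : IsSplittingTree l Z) (ρ : List Bool)
    {σ τ : List Bool} (hlen : σ.length = τ.length) (hne : σ ≠ τ) :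
    (Z (ρ ++ σ) ∩ Z (ρ ++ τ) : Set α) =ᶠ[l] (∅ : Set α) := by
  induction σ generalizing ρ τ with
  | nil => exact absurd (List.length_eq_zero_iff.1 hlen.symm).symm hne
  | cons b σ ih =>
    obtain _ | ⟨c, τ⟩ := τ
    · simp at hlen
    rw [List.append_cons, List.append_cons ρ c]
    by_cases hbc : b = c
    · subst hbc
      exact ih _ (by simpa using hlen) (by simpa using hne)
    · refine EventuallyLE.antisymm ?_ (empty_subset _).eventuallyLE
      exact ((hZ.append_le _ σ).inter (hZ.append_le _ τ)).trans
        (hZ.inter_children_of_ne hbc ρ).le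

theorem inter_eventuallyEq_empty (hZ : IsSplittingTree l Z) {σ τ : List Bool}
    (hlen : σ.length = τ.length) (hne : σ ≠ τ) : (Z σ ∩ Z τ : Set α) =ᶠ[l] (∅ : Set α) :=
  hZ.inter_append_eventuallyEq_empty [] hlen hne

theorem eventuallyEq_biUnion_level (hZ : IsSplittingTree l Z) (ρ : List Bool) (k : ℕ) :
    Z ρ =ᶠ[l] ⋃ τ ∈ level k, Z (ρ ++ τ) := by
  induction k generalizing ρ with
  | zero => simpa [level_zero] using EventuallyEq.refl l (Z ρ)
  | succ k ih =>
    rw [biUnion_level_succ]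
    simpa using (hZ.eq_union_children ρ).trans ((ih _).union (ih _))

theorem exists_level_eventuallyEq (hZ : IsSplittingTree l Z) (D : Finset (List Bool)) :
    ∃ n, ∃ E ⊆ level n, ⋃ ρ ∈ D, Z ρ =ᶠ[l] ⋃ σ ∈ E, Z σ := by
  classical
  set n := D.sup List.length
  refine ⟨n, D.biUnion fun ρ => (level (n - ρ.length)).image (ρ ++ ·), ?_, ?_⟩
  · intro σ hσ
    simp only [Finset.mem_biUnion, Finset.mem_image, mem_level] at hσ ⊢
    obtain ⟨ρ, hρ, τ, hτ, rfl⟩ := hσ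
    have : ρ.length ≤ n := Finset.le_sup (f := List.length) hρ
    simp only [List.length_append]
    omega
  · rw [Finset.set_biUnion_biUnion]
    simp only [Finset.set_biUnion_finset_image]
    exact D.finite_toSet.eventuallyEq_iUnion fun ρ _ => hZ.eventuallyEq_biUnion_level ρ _

end IsSplittingTree

section Lattice

variable {H : Set ℕ} {Z : List Bool → Set ℕ}

theorem exists_complement_of_splittingTree {l : Filter ℕ} (hH : CE H)
    (hce : ∀ ρ, CE (H ∪ Z ρ)) (hZ : IsSplittingTree l Z) (hroot : Z [] =ᶠ[l] Hᶜ) {W : Set ℕ}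
    (hHW : H ⊆ W) {D : Finset (List Bool)} (hD : W \ H =ᶠ[l] ⋃ ρ ∈ D, Z ρ) :
    ∃ V, CE V ∧ H ⊆ V ∧ (V ∩ W : Set ℕ) =ᶠ[l] H ∧
      (V ∪ W : Set ℕ) =ᶠ[l] univ := by
  obtain ⟨n, E, hE, hDE⟩ := hZ.exists_level_eventuallyEq D
  have hW := eventuallyEq_union_of_sdiff hHW (hD.trans hDE)
  refine ⟨H ∪ ⋃ σ ∈ level n \ E, Z σ, hH.union_biUnion hce _, subset_union_left, ?_, ?_⟩
  · have hdisj :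
        ((⋃ σ ∈ level n \ E, Z σ) ∩ ⋃ σ ∈ E, Z σ : Set ℕ) =ᶠ[l] (∅ : Set ℕ) :=
      biUnion_inter_biUnion_eventuallyEq_empty fun σ hσ τ hτ => by
        rw [Finset.mem_sdiff, mem_level] at hσ
        exact hZ.inter_eventuallyEq_empty (hσ.1.trans (mem_level.1 (hE hτ)).symm)
          fun h => hσ.2 (h ▸ hτ)
    refine (EventuallyEq.rfl.inter hW).trans ?_
    rw [← union_inter_distrib_left]
    simpa using EventuallyEq.rfl.union hdisj
  · refine (EventuallyEq.rfl.union hW).trans ?_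
    rw [← union_union_distrib_left, ← Finset.set_biUnion_union, Finset.sdiff_union_of_subset hE]
    refine (EventuallyEq.rfl.union ?_).trans (.of_eq (union_compl_self H))
    have hlevel := hZ.eventuallyEq_biUnion_level [] n
    simp only [List.nil_append] at hlevel
    exact hlevel.symm.trans hroot

theorem exists_split_of_splittingTree (hH : CE H) (hce : ∀ ρ, CE (H ∪ Z ρ))
    (hsub : ∀ ρ, Z ρ ⊆ Hᶜ) (hinf : ∀ ρ, (Z ρ).Infinite) (hZ : IsSplittingTree cofinite Z)
    {W : Set ℕ} (hHW : H ⊆ W) (hWH : (W \ H).Infinite) {D : Finset (List Bool)}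
    (hD : W \ H =ᶠ[cofinite] ⋃ ρ ∈ D, Z ρ) :
    ∃ W₀ W₁ : Set ℕ, CE W₀ ∧ CE W₁ ∧ H ⊆ W₀ ∧ H ⊆ W₁ ∧
      (W₀ ∪ W₁ : Set ℕ) =ᶠ[cofinite] W ∧ (W₀ ∩ W₁ : Set ℕ) =ᶠ[cofinite] H ∧
      (W₀ \ H).Infinite ∧ (W₁ \ H).Infinite := by
  obtain ⟨n, E, hE, hDE⟩ := hZ.exists_level_eventuallyEq D
  obtain ⟨σ, hσ⟩ : E.Nonempty := by
    refine Finset.nonempty_iff_ne_empty.2 fun hE₀ => hWH ?_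
    have h : W \ H =ᶠ[cofinite] (∅ : Set ℕ) := by simpa [hE₀] using hD.trans hDE
    exact (eventually_cofinite.1 (eventuallyEq_empty.1 h)).subset fun x hx => not_not.2 hx
  have hW := eventuallyEq_union_of_sdiff hHW (hD.trans hDE)
  have hdisj : ((⋃ σ ∈ E, Z (σ ++ [false])) ∩ ⋃ σ ∈ E, Z (σ ++ [true]) : Set ℕ)
      =ᶠ[cofinite] (∅ : Set ℕ) :=
    biUnion_inter_biUnion_eventuallyEq_empty fun σ hσ τ hτ =>
      hZ.inter_eventuallyEq_empty (by simp [mem_level.1 (hE hσ), mem_level.1 (hE hτ)]) (by simp)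
  refine ⟨H ∪ ⋃ σ ∈ E, Z (σ ++ [false]), H ∪ ⋃ σ ∈ E, Z (σ ++ [true]),
    hH.union_biUnion (fun _ => hce _) E, hH.union_biUnion (fun _ => hce _) E,
    subset_union_left, subset_union_left, ?_, ?_, ?_, ?_⟩
  · rw [← union_union_distrib_left]
    simp only [← iUnion_union_distrib]
    refine (EventuallyEq.rfl.union ?_).trans hW.symm
    exact E.finite_toSet.eventuallyEq_iUnion fun σ _ => (hZ.eq_union_children σ).symm
  · rw [← union_inter_distrib_left]
    simpa using EventuallyEq.rfl.union hdisj
  · exact (hinf _).mono fun x hx => ⟨Or.inr (mem_iUnion₂.2 ⟨σ, hσ, hx⟩), hsub _ hx⟩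
  · exact (hinf _).mono fun x hx => ⟨Or.inr (mem_iUnion₂.2 ⟨σ, hσ, hx⟩), hsub _ hx⟩

end Lattice

theorem splitting_tree_gives_atomless_boolean_algebra_general (H : Set ℕ) (Z : List Bool → Set ℕ)
    (hH : CE H)
    (hsub : ∀ ρ, Z ρ ⊆ Hᶜ)
    (hroot : EqStar (Z []) Hᶜ)
    (hinf : ∀ ρ, (Z ρ).Infinite)
    (hce : ∀ ρ, CE (H ∪ Z ρ))
    (hsplit : ∀ ρ, Z (ρ ++ [false]) ∩ Z (ρ ++ [true]) = ∅ ∧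
      EqStar (Z ρ) (Z (ρ ++ [false]) ∪ Z (ρ ++ [true])))
    (hcover : ∀ W : Set ℕ, CE W →
      ∃ D : Finset (List Bool), EqStar (W ∩ Hᶜ) (⋃ ρ ∈ D, Z ρ)) :
    (∀ W : Set ℕ, CE W → H ⊆ W →
      ∃ V : Set ℕ, CE V ∧ H ⊆ V ∧ EqStar (V ∩ W) H ∧ EqStar (V ∪ W) Set.univ) ∧
    (∀ W : Set ℕ, CE W → H ⊆ W → (W \ H).Infinite →
      ∃ W₀ W₁ : Set ℕ, CE W₀ ∧ CE W₁ ∧ H ⊆ W₀ ∧ H ⊆ W₁ ∧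
        EqStar (W₀ ∪ W₁) W ∧ EqStar (W₀ ∩ W₁) H ∧
        (W₀ \ H).Infinite ∧ (W₁ \ H).Infinite) := by
  have hZ : IsSplittingTree cofinite Z :=
    ⟨fun ρ => .of_eq (hsplit ρ).1, fun ρ => eqStar_iff_eventuallyEq.1 (hsplit ρ).2⟩
  have hcover' (W : Set ℕ) (hW : CE W) :
      ∃ D : Finset (List Bool), W \ H =ᶠ[cofinite] ⋃ ρ ∈ D, Z ρ :=
    (hcover W hW).imp fun _ => eqStar_iff_eventuallyEq.1
  simp only [eqStar_iff_eventuallyEq]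
  refine ⟨fun W hW hHW => ?_, fun W hW hHW hWH => ?_⟩
  · obtain ⟨D, hD⟩ := hcover' W hW
    exact exists_complement_of_splittingTree hH hce hZ (eqStar_iff_eventuallyEq.1 hroot) hHW hD
  · obtain ⟨D, hD⟩ := hcover' W hW
    exact exists_split_of_splittingTree hH hce hsub hinf hZ hHW hWH hD

/-- If a coinfinite c.e. set `H` carries a splitting tree of sets `Z ρ` as in the
atomless hyperhypersimple construction, then every c.e. superset of `H` is complemented
in `L*(H)`, and every c.e. superset `W` of `H` with `W \ H` infinite splits into two
halves that are infinite off `H`; hence `L*(H)` is an atomless Boolean algebra. -/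
theorem splitting_tree_gives_atomless_boolean_algebra (H : Set ℕ) (Z : List Bool → Set ℕ)
    (hH : CE H) (hco : (Hᶜ : Set ℕ).Infinite)
    (hsub : ∀ ρ, Z ρ ⊆ Hᶜ)
    (hroot : EqStar (Z []) Hᶜ)
    (hinf : ∀ ρ, (Z ρ).Infinite)
    (hce : ∀ ρ, CE (H ∪ Z ρ))
    (hsplit : ∀ ρ, Z (ρ ++ [false]) ∩ Z (ρ ++ [true]) = ∅ ∧
      EqStar (Z ρ) (Z (ρ ++ [false]) ∪ Z (ρ ++ [true])))
    (hcover : ∀ W : Set ℕ, CE W →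
      ∃ D : Finset (List Bool), EqStar (W ∩ Hᶜ) (⋃ ρ ∈ D, Z ρ)) :
    (∀ W : Set ℕ, CE W → H ⊆ W →
      ∃ V : Set ℕ, CE V ∧ H ⊆ V ∧ EqStar (V ∩ W) H ∧ EqStar (V ∪ W) Set.univ) ∧
    (∀ W : Set ℕ, CE W → H ⊆ W → (W \ H).Infinite →
      ∃ W₀ W₁ : Set ℕ, CE W₀ ∧ CE W₁ ∧ H ⊆ W₀ ∧ H ⊆ W₁ ∧
        EqStar (W₀ ∪ W₁) W ∧ EqStar (W₀ ∩ W₁) H ∧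
        (W₀ \ H).Infinite ∧ (W₁ \ H).Infinite) :=
  splitting_tree_gives_atomless_boolean_algebra_general H Z hH hsub hroot hinf hce hsplit hcover

end Hhs
end

section
/- Every countable Boolean algebra can be presented by a binary tree: for every countable Boolean algebra B there exists a map g : 2^{<ω} → B such that g(ε) = ⊤, g(σ) = g(σ0) ⊔ g(σ1) and g(σ0) ⊓ g(σ1) = ⊥ for every σ, and the image of g generates B as a Boolean algebra. -/
namespace Hhs

variable {B : Type*} [BooleanAlgebra B]

/-- Membership in the Boolean subalgebra generated by a set `S`. -/
inductive InBoolGen (S : Set B) : B → Prop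
  | basic {a : B} : a ∈ S → InBoolGen S a
  | bot : InBoolGen S ⊥
  | sup {a b : B} : InBoolGen S a → InBoolGen S b → InBoolGen S (a ⊔ b)
  | compl {a : B} : InBoolGen S a → InBoolGen S aᶜ

/-- A set `S` generates `B` if the Boolean subalgebra generated by `S` is all of `B`. -/
def GeneratesBool (S : Set B) : Prop := ∀ b : B, InBoolGen S b

private def treeAux (f : ℕ → B) : ℕ → List Bool → B
  | _, [] => ⊤
  | n, b :: σ => (if b then f n else (f n)ᶜ) ⊓ treeAux f (n + 1) σ

private lemma treeAux_append (f : ℕ → B) (σ : List Bool) (b : Bool) :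
    ∀ n, treeAux f n (σ ++ [b]) =
      treeAux f n σ ⊓ (if b then f (n + σ.length) else (f (n + σ.length))ᶜ) := by
  induction σ with
  | nil => intro n; simp [treeAux]
  | cons c σ ih =>
    intro n
    have : n + (σ.length + 1) = (n + 1) + σ.length := by omega
    simp [treeAux, ih (n + 1), inf_assoc, this]

/-- Every countable Boolean algebra can be presented by a binary tree: there is a map
`g : 2^{<ω} → B` sending the empty string to `⊤`, each string to the disjoint join of its
two one-bit extensions, whose image generates `B`. -/
theorem countable_boolean_algebra_tree_presentation
    (B : Type*) [BooleanAlgebra B] [Countable B] :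
    ∃ g : List Bool → B,
      g [] = ⊤ ∧
      (∀ σ : List Bool, g σ = g (σ ++ [false]) ⊔ g (σ ++ [true])) ∧
      (∀ σ : List Bool, g (σ ++ [false]) ⊓ g (σ ++ [true]) = ⊥) ∧
      GeneratesBool (Set.range g) := by
  have : Nonempty B := ⟨⊤⟩
  obtain ⟨f, hf⟩ := exists_surjective_nat B
  refine ⟨treeAux f 0, rfl, ?_, ?_, ?_⟩
  · intro σ
    rw [treeAux_append, treeAux_append]
    simp [← inf_sup_left]
  · intro σ
    rw [treeAux_append, treeAux_append]
    simp only [if_true, if_false]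
    refine le_antisymm ?_ bot_le
    calc treeAux f 0 σ ⊓ (f (0 + σ.length))ᶜ ⊓ (treeAux f 0 σ ⊓ f (0 + σ.length))
        ≤ (f (0 + σ.length))ᶜ ⊓ f (0 + σ.length) := inf_le_inf inf_le_right inf_le_right
      _ = ⊥ := by simp
  · have key : ∀ n (x : B),
        (∀ σ : List Bool, σ.length = n →
          InBoolGen (Set.range (treeAux f 0)) (x ⊓ treeAux f 0 σ)) →
        InBoolGen (Set.range (treeAux f 0)) x := by
      intro n
      induction n with
      | zero =>
        intro x h
        have := h [] rfl
        simpa [treeAux] using this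
      | succ n ih =>
        intro x h
        apply ih
        intro σ hσ
        have h0 := h (σ ++ [false]) (by simp [hσ])
        have h1 := h (σ ++ [true]) (by simp [hσ])
        have heq : x ⊓ treeAux f 0 σ =
            (x ⊓ treeAux f 0 (σ ++ [false])) ⊔ (x ⊓ treeAux f 0 (σ ++ [true])) := by
          rw [treeAux_append, treeAux_append]
          simp [← inf_assoc, ← inf_sup_left]
        rw [heq]
        exact InBoolGen.sup h0 h1
    intro b
    obtain ⟨m, rfl⟩ := hf b
    apply key (m + 1)
    intro τ hτ
    rcases List.eq_nil_or_concat τ with rfl | ⟨σ, c, rfl⟩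
    · simp at hτ
    · have hσ : σ.length = m := by simpa using hτ
      rw [List.concat_eq_append, treeAux_append]
      cases c with
      | false =>
        have : f m ⊓ (treeAux f 0 σ ⊓ (f (0 + σ.length))ᶜ) = ⊥ := by
          rw [inf_left_comm]
          simp [hσ]
        rw [show (if (false:Bool) = true then f (0 + σ.length) else (f (0 + σ.length))ᶜ) = (f (0 + σ.length))ᶜ from rfl, this]
        exact InBoolGen.bot
      | true =>
        have : f m ⊓ (treeAux f 0 σ ⊓ f (0 + σ.length)) =
            treeAux f 0 (σ ++ [true]) := by
          rw [treeAux_append, inf_left_comm, hσ]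
          simp
        rw [show (if (true:Bool) = true then f (0 + σ.length) else (f (0 + σ.length))ᶜ) = f (0 + σ.length) from rfl, this]
        exact InBoolGen.basic ⟨σ ++ [true], rfl⟩
    
end Hhs
end

section
/- Let B be a Boolean algebra and g : 2^{<ω} → B a map with g(ε) = ⊤, g(σ) = g(σ0) ⊔ g(σ1) and g(σ0) ⊓ g(σ1) = ⊥ for every σ, whose image generates B. Let T = {σ ∈ 2^{<ω} : g(σ) ≠ ⊥}. Then every node of T has a child in T, and an element a ∈ B is an atom of B if and only if a = g(σ) for some σ ∈ T such that there is exactly one infinite binary sequence x extending σ all of whose finite initial segments belong to T (i.e., σ isolates a path of T). -/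
/-!
Along any branch `x`, every element `b` of `B` is eventually decided: some `g (x↾n)` lies below
`b` or below `bᶜ`. This holds for the generators, since values at distinct strings of equal
length are disjoint, and it survives `⊔` and complements.

An atom `a` lies below `g` along a branch `x`; deciding `a` along `x` gives `a = g (x↾n)`, and any
path of `T` through `x↾n` stays below `a`, hence is `x`. Conversely, if `σ` isolates the path `x`,
the siblings off `x` beyond `σ` have value `⊥`, so `g` is constant along `x` from `σ` on, and
deciding `b < g σ` along `x` forces `b = ⊥`.
-/

namespace Hhs

variable {B : Type*} [BooleanAlgebra B]

/-- `IsPathThrough T σ x` says that the infinite binary sequence `x` extends the finite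
string `σ` and all finite initial segments of `x` belong to `T`. -/
def IsPathThrough (T : Set (List Bool)) (σ : List Bool) (x : ℕ → Bool) : Prop :=
  (List.ofFn fun i : Fin σ.length => x i) = σ ∧
    ∀ n : ℕ, (List.ofFn fun i : Fin n => x i) ∈ T

lemma _root_.IsAtom.le_sup_iff {α : Type*} [DistribLattice α] [OrderBot α] {a b c : α}
    (ha : IsAtom a) : a ≤ b ⊔ c ↔ a ≤ b ∨ a ≤ c := by
  refine ⟨fun h => ?_, fun h => h.elim (le_sup_of_le_left ·) (le_sup_of_le_right ·)⟩
  rcases ha.le_iff.mp (inf_le_left : a ⊓ b ≤ a) with hab | hab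
  · exact Or.inr (Disjoint.left_le_of_le_sup_left h (disjoint_iff.mpr hab))
  · exact Or.inl (inf_eq_left.mp hab)

def initSeg (x : ℕ → Bool) (n : ℕ) : List Bool := List.ofFn fun i : Fin n => x i

@[simp]
lemma length_initSeg (x : ℕ → Bool) (n : ℕ) : (initSeg x n).length = n := List.length_ofFn

@[simp]
lemma getElem_initSeg (x : ℕ → Bool) {n i : ℕ} (h : i < (initSeg x n).length) :
    (initSeg x n)[i] = x i := List.getElem_ofFn ..

lemma initSeg_succ (x : ℕ → Bool) (n : ℕ) : initSeg x (n + 1) = initSeg x n ++ [x n] :=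
  List.ext_getElem (by simp) fun i h₁ h₂ => by
    simp only [length_initSeg] at h₁
    rcases Nat.lt_succ_iff_lt_or_eq.mp h₁ with h | rfl
    · simp [List.getElem_append_left, h]
    · simp [List.getElem_append_right]

lemma take_initSeg (x : ℕ → Bool) {m n : ℕ} (h : m ≤ n) :
    (initSeg x n).take m = initSeg x m :=
  List.ext_getElem (by simp [h]) fun i _ _ => by simp

lemma initSeg_prefix_initSeg (x : ℕ → Bool) {m n : ℕ} (h : m ≤ n) :
    initSeg x m <+: initSeg x n :=
  take_initSeg x h ▸ List.take_prefix _ _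

lemma isPathThrough_iff {T : Set (List Bool)} {σ : List Bool} {x : ℕ → Bool} :
    IsPathThrough T σ x ↔ initSeg x σ.length = σ ∧ ∀ n, initSeg x n ∈ T := Iff.rfl

lemma IsPathThrough.initSeg_length {T : Set (List Bool)} {σ : List Bool} {x : ℕ → Bool}
    (h : IsPathThrough T σ x) : initSeg x σ.length = σ := h.1

lemma IsPathThrough.prefix_initSeg {T : Set (List Bool)} {σ : List Bool} {x : ℕ → Bool}
    (h : IsPathThrough T σ x) {n : ℕ} (hn : σ.length ≤ n) : σ <+: initSeg x n :=
  h.1 ▸ initSeg_prefix_initSeg x hn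

lemma IsPathThrough.of_prefix {T : Set (List Bool)} {σ τ : List Bool} {x : ℕ → Bool}
    (hστ : σ <+: τ) (h : IsPathThrough T τ x) : IsPathThrough T σ x := by
  rw [isPathThrough_iff] at h ⊢
  refine ⟨?_, h.2⟩
  rw [← take_initSeg x hστ.length_le, h.1]
  exact (List.prefix_iff_eq_take.mp hστ).symm

lemma IsPathThrough.apply_of_lt {T : Set (List Bool)} {σ : List Bool} {x : ℕ → Bool}
    (h : IsPathThrough T σ x) {i : ℕ} (hi : i < σ.length) : x i = σ[i] :=
  (getElem_initSeg x (by simpa using hi)).symm.trans (List.getElem_of_eq h.1 _)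

lemma exists_isPathThrough {T : Set (List Bool)} (hdown : ∀ σ τ, σ <+: τ → τ ∈ T → σ ∈ T)
    (hchild : ∀ σ ∈ T, ∃ b, σ ++ [b] ∈ T) {σ : List Bool} (hσ : σ ∈ T) :
    ∃ x, IsPathThrough T σ x := by
  choose! child hchild using hchild
  let ρ : ℕ → List Bool := fun k => Nat.rec σ (fun _ τ => τ ++ [child τ]) k
  have hρ_succ (k : ℕ) : ρ (k + 1) = ρ k ++ [child (ρ k)] := rfl
  have hρ_mem (k : ℕ) : ρ k ∈ T := by
    induction k with
    | zero => exact hσ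
    | succ k ih => exact hchild _ ih
  have hρ_length (k : ℕ) : (ρ k).length = σ.length + k := by
    induction k with
    | zero => rfl
    | succ k ih => simp [hρ_succ, ih, Nat.add_assoc]
  have hρ_prefix {k l : ℕ} (h : k ≤ l) : ρ k <+: ρ l := by
    induction l, h using Nat.le_induction with
    | base => exact List.prefix_rfl
    | succ l _ ih => exact ih.trans (hρ_succ l ▸ List.prefix_append _ _)
  let x : ℕ → Bool := fun n => (ρ (n + 1)).getD n false
  have hx (n : ℕ) : initSeg x n = (ρ n).take n := by
    refine List.ext_getElem (by simp [hρ_length]) fun i hi _ => ?_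
    have hi' : i < n := by simpa using hi
    have hlt : i < (ρ (i + 1)).length := by rw [hρ_length (i + 1)]; omega
    simp only [getElem_initSeg, List.getElem_take, x, List.getD_eq_getElem _ _ hlt]
    exact (hρ_prefix hi').getElem hlt
  refine ⟨x, isPathThrough_iff.mpr ⟨?_, fun n => hdown _ _ ?_ (hρ_mem n)⟩⟩
  · rw [hx]
    exact (List.prefix_iff_eq_take.mp (hρ_prefix (Nat.zero_le σ.length))).symm
  · rw [hx]; exact List.take_prefix _ _

section Presentation

variable {g : List Bool → B}

variable (hsup : ∀ σ : List Bool, g σ = g (σ ++ [false]) ⊔ g (σ ++ [true]))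
include hsup

lemma le_of_concat (σ : List Bool) (b : Bool) : g (σ ++ [b]) ≤ g σ := by
  rw [hsup σ]
  cases b
  exacts [le_sup_left, le_sup_right]

lemma eq_sup_concat_not (σ : List Bool) (b : Bool) : g σ = g (σ ++ [b]) ⊔ g (σ ++ [!b]) := by
  cases b
  exacts [hsup σ, (hsup σ).trans (sup_comm _ _)]

lemma le_of_prefix {σ τ : List Bool} (h : σ <+: τ) : g τ ≤ g σ := by
  obtain ⟨ρ, rfl⟩ := h
  induction ρ using List.reverseRecOn with
  | nil => simp
  | append_singleton ρ b ih => exact (List.append_assoc σ ρ [b] ▸ le_of_concat hsup _ b).trans ih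

lemma initSeg_antitone (x : ℕ → Bool) {m n : ℕ} (h : m ≤ n) :
    g (initSeg x n) ≤ g (initSeg x m) :=
  le_of_prefix hsup (initSeg_prefix_initSeg x h)

lemma concat_ne_bot_or {σ : List Bool} (hσ : g σ ≠ ⊥) :
    g (σ ++ [false]) ≠ ⊥ ∨ g (σ ++ [true]) ≠ ⊥ := by
  by_contra! h
  exact hσ (by rw [hsup σ, h.1, h.2, sup_bot_eq])

lemma exists_isPathThrough_ne_bot {σ : List Bool} (hσ : g σ ≠ ⊥) :
    ∃ x, IsPathThrough {τ | g τ ≠ ⊥} σ x :=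
  exists_isPathThrough (T := {τ | g τ ≠ ⊥})
    (fun _ _ h hτ hσ => hτ (le_bot_iff.mp (hσ ▸ le_of_prefix hsup h)))
    (fun _ hτ => (concat_ne_bot_or hsup hτ).elim (⟨false, ·⟩) (⟨true, ·⟩)) hσ

lemma le_initSeg_of_isPathThrough {σ : List Bool} {y : ℕ → Bool} (hσ : IsAtom (g σ))
    (hy : IsPathThrough {τ | g τ ≠ ⊥} σ y) (m : ℕ) : g σ ≤ g (initSeg y m) := by
  have hk : g (initSeg y (max m σ.length)) = g σ :=
    (hσ.le_iff.mp (le_of_prefix hsup (hy.prefix_initSeg (le_max_right _ _)))).resolve_left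
      (hy.2 _)
  exact hk ▸ initSeg_antitone hsup y (le_max_left _ _)

lemma initSeg_eq_of_isPathThrough_unique {σ : List Bool} {x : ℕ → Bool}
    (hx : IsPathThrough {τ | g τ ≠ ⊥} σ x)
    (huniq : ∀ y, IsPathThrough {τ | g τ ≠ ⊥} σ y → y = x) {m : ℕ} (hm : σ.length ≤ m) :
    g (initSeg x m) = g σ := by
  induction m, hm using Nat.le_induction with
  | base => rw [hx.initSeg_length]
  | succ m hm ih =>
    have hbranch : g (initSeg x m ++ [!x m]) = ⊥ := by
      by_contra hne
      obtain ⟨y, hy⟩ := exists_isPathThrough_ne_bot hsup hne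
      have hyx : y = x :=
        huniq y (hy.of_prefix ((hx.prefix_initSeg hm).trans (List.prefix_append _ _)))
      have hym : y m = !x m := by simpa using hy.apply_of_lt (i := m) (by simp)
      simp [hyx] at hym
    rw [initSeg_succ, ← ih, eq_sup_concat_not hsup (initSeg x m) (x m), hbranch, sup_bot_eq]

variable (hinf : ∀ σ : List Bool, g (σ ++ [false]) ⊓ g (σ ++ [true]) = ⊥)
include hinf

lemma disjoint_of_length_eq_of_ne {σ τ : List Bool} (hl : σ.length = τ.length) (hne : σ ≠ τ) :
    Disjoint (g σ) (g τ) := by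
  induction σ using List.reverseRecOn generalizing τ with
  | nil => exact absurd (List.eq_nil_of_length_eq_zero hl.symm).symm hne
  | append_singleton σ a ih =>
    obtain ⟨τ, b, rfl⟩ := τ.eq_nil_or_concat'.resolve_left (by rintro rfl; simp at hl)
    simp only [List.length_append, List.length_singleton, Nat.add_right_cancel_iff] at hl
    by_cases hστ : σ = τ
    · subst hστ
      have hab : a ≠ b := by rintro rfl; exact hne rfl
      rw [disjoint_iff]
      cases a <;> cases b
      exacts [absurd rfl hab, hinf σ, inf_comm (g _) _ ▸ hinf σ, absurd rfl hab]
    · exact (ih hl hστ).mono (le_of_concat hsup σ a) (le_of_concat hsup τ b)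

lemma eq_of_forall_le_initSeg {a : B} (ha : a ≠ ⊥) {x y : ℕ → Bool}
    (hx : ∀ n, a ≤ g (initSeg x n)) (hy : ∀ n, a ≤ g (initSeg y n)) : x = y := by
  funext n
  by_contra hne
  have hseg : initSeg x (n + 1) ≠ initSeg y (n + 1) := fun h => by
    rw [initSeg_succ, initSeg_succ] at h
    exact hne (List.singleton_inj.mp (List.append_inj' h rfl).2)
  exact ha (le_bot_iff.mp
    (disjoint_of_length_eq_of_ne hsup hinf (by simp) hseg (hx (n + 1)) (hy (n + 1))))

variable (hgen : GeneratesBool (Set.range g))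
include hgen

lemma exists_initSeg_le_or_le_compl (x : ℕ → Bool) (b : B) :
    ∃ n, g (initSeg x n) ≤ b ∨ g (initSeg x n) ≤ bᶜ := by
  induction hgen b with
  | basic hb =>
    obtain ⟨τ, rfl⟩ := hb
    refine ⟨τ.length, ?_⟩
    by_cases h : initSeg x τ.length = τ
    · exact Or.inl (by rw [h])
    · exact Or.inr (le_compl_iff_disjoint_right.mpr
        (disjoint_of_length_eq_of_ne hsup hinf (by simp) h))
  | bot => exact ⟨0, Or.inr (by simp)⟩
  | sup _ _ ih₁ ih₂ =>
    obtain ⟨n₁, h₁⟩ := ih₁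
    obtain ⟨n₂, h₂⟩ := ih₂
    have hle₁ := initSeg_antitone hsup x (le_max_left n₁ n₂)
    have hle₂ := initSeg_antitone hsup x (le_max_right n₁ n₂)
    refine ⟨max n₁ n₂, ?_⟩
    rcases h₁ with h₁ | h₁
    · exact Or.inl ((hle₁.trans h₁).trans le_sup_left)
    rcases h₂ with h₂ | h₂
    · exact Or.inl ((hle₂.trans h₂).trans le_sup_right)
    · exact Or.inr (by rw [compl_sup]; exact le_inf (hle₁.trans h₁) (hle₂.trans h₂))
  | compl _ ih =>
    obtain ⟨n, h⟩ := ih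
    exact ⟨n, by rwa [compl_compl, or_comm]⟩

lemma isAtom_of_existsUnique_isPathThrough {σ : List Bool} (hσ : g σ ≠ ⊥)
    (h : ∃! x, IsPathThrough {τ | g τ ≠ ⊥} σ x) : IsAtom (g σ) := by
  obtain ⟨x, hx, huniq⟩ := h
  refine ⟨hσ, fun b hb => ?_⟩
  obtain ⟨n, hn⟩ := exists_initSeg_le_or_le_compl hsup hinf hgen x b
  have hσn : g σ ≤ g (initSeg x n) :=
    initSeg_eq_of_isPathThrough_unique hsup hx huniq (le_max_right n σ.length) ▸
      initSeg_antitone hsup x (le_max_left n σ.length)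
  rcases hn with hn | hn
  · exact absurd (hσn.trans hn) hb.not_ge
  · exact le_compl_self.mp (hb.le.trans (hσn.trans hn))

lemma exists_eq_of_isAtom (hroot : g [] = ⊤) {a : B} (ha : IsAtom a) :
    ∃ σ, g σ ≠ ⊥ ∧ a = g σ ∧ ∃! x, IsPathThrough {τ | g τ ≠ ⊥} σ x := by
  obtain ⟨x, -, hx⟩ := exists_isPathThrough (T := {τ | a ≤ g τ}) (σ := [])
    (fun _ _ h hτ => hτ.trans (le_of_prefix hsup h))
    (fun τ hτ => ha.le_sup_iff.mp (hsup τ ▸ hτ) |>.elim (⟨false, ·⟩) (⟨true, ·⟩))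
    (by simp [hroot])
  obtain ⟨n, hn⟩ := exists_initSeg_le_or_le_compl hsup hinf hgen x a
  have ha_eq : a = g (initSeg x n) :=
    le_antisymm (hx n) (hn.resolve_right fun h => ha.1 (le_compl_self.mp ((hx n).trans h)))
  have hpath : IsPathThrough {τ | g τ ≠ ⊥} (initSeg x n) x :=
    ⟨congrArg (initSeg x) (length_initSeg x n), fun m => ha.1 ∘ le_bot_iff.mp ∘ (hx m).trans_eq⟩
  refine ⟨initSeg x n, ha_eq ▸ ha.1, ha_eq, x, hpath, fun y hy => ?_⟩
  exact eq_of_forall_le_initSeg hsup hinf ha.1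
    (ha_eq ▸ le_initSeg_of_isPathThrough hsup (ha_eq ▸ ha) hy) hx

end Presentation

/-- For a tree presentation `g` of a Boolean algebra `B`, with `T` the set of strings with
nonzero value: every node of `T` has a child in `T`, and the atoms of `B` are exactly the
values `g σ` for `σ ∈ T` isolating a unique path of `T`. -/
theorem atoms_of_tree_presentation (g : List Bool → B)
    (hroot : g [] = ⊤)
    (hsup : ∀ σ : List Bool, g σ = g (σ ++ [false]) ⊔ g (σ ++ [true]))
    (hinf : ∀ σ : List Bool, g (σ ++ [false]) ⊓ g (σ ++ [true]) = ⊥)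
    (hgen : GeneratesBool (Set.range g))
    (T : Set (List Bool)) (hT : T = {σ : List Bool | g σ ≠ ⊥}) :
    (∀ σ ∈ T, σ ++ [false] ∈ T ∨ σ ++ [true] ∈ T) ∧
    (∀ a : B, IsAtom a ↔
      ∃ σ ∈ T, a = g σ ∧ ∃! x : ℕ → Bool, IsPathThrough T σ x) := by
  subst hT
  refine ⟨fun σ hσ => concat_ne_bot_or hsup hσ, fun a => ⟨?_, ?_⟩⟩
  · exact exists_eq_of_isAtom hsup hinf hgen hroot
  · rintro ⟨σ, hσ, rfl, h⟩
    exact isAtom_of_existsUnique_isPathThrough hsup hinf hgen hσ h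

end Hhs
end
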